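/- arXiv:1406.5005 — 2 statements merged into one kernel-verified Lean document; each statement's English description precedes it below -/
import Mathlib

section
/- Let Σ and T be n×n symmetric positive semidefinite matrices with Σ + T invertible, and Σ* := Σ − Σ(Σ+T)⁻¹Σ. Then for each i, Σ*_{ii} ≤ min(Σ_{ii}, T_{ii}). -/
open Matrix

lemma psd_diag_nonneg {n : ℕ} {M : Matrix (Fin n) (Fin n) ℝ}
    (hM : M.PosSemidef) (i : Fin n) : 0 ≤ M i i := by
  exact hM.diag_nonneg

theorem stmt10 {n : ℕ} (S T : Matrix (Fin n) (Fin n) ℝ)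
    (hS : S.PosSemidef) (hT : T.PosSemidef) (h : IsUnit (S + T)) :
    ∀ i, (S - S * (S + T)⁻¹ * S) i i ≤ min (S i i) (T i i) := by
  intro i
  have hdet : IsUnit (S + T).det := (isUnit_iff_isUnit_det _).1 h
  have hinv : ((S + T)⁻¹).PosSemidef := (hS.add hT).inv
  -- first inequality: Σ* ≤ S since S(S+T)⁻¹S is PSD
  have h1 : (S * (S + T)⁻¹ * S).PosSemidef := by
    have := hinv.mul_mul_conjTranspose_same S
    rwa [hS.1.eq] at this
  -- identity: S - S(S+T)⁻¹S = S(S+T)⁻¹T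
  have key : S - S * (S + T)⁻¹ * S = S * (S + T)⁻¹ * T := by
    have hST : S * (S + T)⁻¹ * (S + T) = S := by
      rw [mul_assoc, nonsing_inv_mul _ hdet, mul_one]
    nth_rewrite 1 [← hST]
    rw [mul_add]; abel
  -- identity: T - S(S+T)⁻¹T = T(S+T)⁻¹T
  have key2 : T - S * (S + T)⁻¹ * T = T * (S + T)⁻¹ * T := by
    have hST : (S + T) * (S + T)⁻¹ * T = T := by
      rw [mul_nonsing_inv _ hdet, one_mul]
    nth_rewrite 1 [← hST]
    rw [add_mul, add_mul]; abel
  have h2 : (T * (S + T)⁻¹ * T).PosSemidef := by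
    have := hinv.mul_mul_conjTranspose_same T
    rwa [hT.1.eq] at this
  refine le_min ?_ ?_
  · have := psd_diag_nonneg h1 i
    simp only [Matrix.sub_apply]; linarith
  · have := psd_diag_nonneg h2 i
    rw [key]
    have : (T - S * (S + T)⁻¹ * T) i i ≥ 0 := key2 ▸ this
    simp only [Matrix.sub_apply] at this ⊢
    linarith
end

section
/- There exist a 2×2 positive semidefinite matrix Ξ, a 3×2 matrix A with Σ := AΞAᵀ singular, and a 3×3 diagonal positive definite matrix T with all diagonal entries of T at most 1, such that the updated variance Σ* := Σ − Σ(Σ+T)⁻¹Σ satisfies Σ* ≤ T in the Loewner order but Σ* is not close to T (e.g., ‖Σ* − T‖ ≥ 1/2 in the operator norm), even though every eigenvalue of Ξ exceeds 10⁵ times every eigenvalue of T. Concretely, Ξ = 10⁶·[[1, 0.4],[0.4, 1]], A = [[1,1],[1,0],[0,1]], T = diag(1, 0.1, 0.1) provide such an example. -/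
open Matrix

set_option maxHeartbeats 2000000 in
/-- The concrete counterexample: `T` small relative to a singular `Σ = A Ξ Aᵀ`
does not imply `Σ* ≈ T`, even though `Σ* ≤ T` in the Loewner order. -/
theorem stmt11 (Xi : Matrix (Fin 2) (Fin 2) ℝ)
    (hXidef : Xi = (10 ^ 6 : ℝ) • !![1, 0.4; 0.4, 1])
    (A : Matrix (Fin 3) (Fin 2) ℝ) (hAdef : A = !![1, 1; 1, 0; 0, 1])
    (T : Matrix (Fin 3) (Fin 3) ℝ) (hTdef : T = Matrix.diagonal ![1, 0.1, 0.1])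
    (S : Matrix (Fin 3) (Fin 3) ℝ) (hSdef : S = A * Xi * Aᵀ)
    (Sstar : Matrix (Fin 3) (Fin 3) ℝ) (hSstardef : Sstar = S - S * (S + T)⁻¹ * S) :
    Xi.PosSemidef ∧
    ¬ IsUnit S.det ∧
    T.PosDef ∧ (∀ i, T i i ≤ 1) ∧
    (T - Sstar).PosSemidef ∧
    (1 / 2 : ℝ) ≤ ‖Matrix.toEuclideanCLM (𝕜 := ℝ) (Sstar - T)‖ ∧
    (∀ a ∈ spectrum ℝ Xi, ∀ b ∈ spectrum ℝ T, (10 ^ 5 : ℝ) * b < a) := by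
  -- explicit value of S
  have hS : S = !![2800000, 1400000, 1400000; 1400000, 1000000, 400000;
      1400000, 400000, 1000000] := by
    rw [hSdef, hAdef, hXidef]
    ext i j
    fin_cases i <;> fin_cases j <;>
      simp [Matrix.mul_apply, Fin.sum_univ_succ, Matrix.transpose_apply,
        Matrix.vecHead, Matrix.vecTail] <;> norm_num
  -- explicit value of S + T
  have hM : S + T = !![2800001, 1400000, 1400000; 1400000, 10000001/10, 400000;
      1400000, 400000, 10000001/10] := by
    rw [hS, hTdef]
    ext i j
    fin_cases i <;> fin_cases j <;>
      simp [Matrix.diagonal] <;> norm_num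
  -- explicit inverse of S + T
  have hMinv : (S + T)⁻¹ =
      !![14000001/16800001, -14000000/16800001, -14000000/16800001;
        -14000000/16800001, 84000128000010/100800022800001, 83999960000000/100800022800001;
        -14000000/16800001, 83999960000000/100800022800001, 84000128000010/100800022800001] := by
    apply Matrix.inv_eq_right_inv
    rw [hM]
    ext i j
    fin_cases i <;> fin_cases j <;>
      simp [Matrix.mul_apply, Fin.sum_univ_succ, Matrix.one_apply,
        Matrix.vecHead, Matrix.vecTail] <;> norm_num
  -- explicit value of Sstar
  have hSstar : Sstar =
      !![2800000/16800001, 1400000/16800001, 1400000/16800001;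
        1400000/16800001, 9240001000000/100800022800001, -839999600000/100800022800001;
        1400000/16800001, -839999600000/100800022800001, 9240001000000/100800022800001] := by
    rw [hSstardef, hMinv, hS]
    ext i j
    fin_cases i <;> fin_cases j <;>
      simp [Matrix.mul_apply, Fin.sum_univ_succ, Matrix.sub_apply,
        Matrix.vecHead, Matrix.vecTail] <;> norm_num
  refine ⟨?_, ?_, ?_, ?_, ?_, ?_, ?_⟩
  · -- Xi is PSD
    refine Matrix.PosSemidef.of_dotProduct_mulVec_nonneg ?_ ?_
    · rw [hXidef]
      ext i j
      fin_cases i <;> fin_cases j <;> simp [Matrix.conjTranspose_apply, Matrix.vecHead, Matrix.vecTail] <;> norm_num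
    · intro x
      rw [hXidef]
      have h := sq_nonneg (x 0 + x 1)
      have h' := sq_nonneg (x 0 - x 1)
      simp [dotProduct, Matrix.mulVec, Fin.sum_univ_two]
      nlinarith [sq_nonneg (x 0 + x 1), sq_nonneg (x 0 - x 1)]
  · -- S is singular
    rw [hS, Matrix.det_fin_three]
    norm_num [Matrix.vecHead, Matrix.vecTail, Matrix.cons_val_two]
  · -- T is PosDef
    rw [hTdef]
    apply Matrix.PosDef.diagonal
    intro i
    fin_cases i <;> norm_num
  · -- diagonal entries of T at most 1
    intro i
    rw [hTdef]
    fin_cases i <;> simp [Matrix.diagonal] <;> norm_num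
  · -- T - Sstar is PSD
    have hQ : T - Sstar =
        !![14000001/16800001, -1400000/16800001, -1400000/16800001;
          -1400000/16800001, 8400012800001/1008000228000010, 839999600000/100800022800001;
          -1400000/16800001, 839999600000/100800022800001, 8400012800001/1008000228000010] := by
      rw [hTdef, hSstar]
      ext i j
      fin_cases i <;> fin_cases j <;>
        simp [Matrix.diagonal, Matrix.sub_apply, Matrix.vecHead, Matrix.vecTail] <;> norm_num
    rw [hQ]
    refine Matrix.PosSemidef.of_dotProduct_mulVec_nonneg ?_ ?_
    · ext i j
      fin_cases i <;> fin_cases j <;> simp [Matrix.conjTranspose_apply, Matrix.vecHead, Matrix.vecTail] <;> norm_num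
    · intro x
      simp [dotProduct, Matrix.mulVec, Fin.sum_univ_three, Matrix.vecHead, Matrix.vecTail]
      nlinarith [sq_nonneg (14000001 * x 0 - 1400000 * x 1 - 1400000 * x 2),
        sq_nonneg (10000001 * x 1 - 4000000 * x 2), sq_nonneg (x 2),
        sq_nonneg (x 1 - x 2), sq_nonneg (x 1 + x 2)]
  · -- operator norm lower bound
    have hD : Sstar - T =
        !![-(14000001/16800001), 1400000/16800001, 1400000/16800001;
          1400000/16800001, -(8400012800001/1008000228000010), -(839999600000/100800022800001);
          1400000/16800001, -(839999600000/100800022800001), -(8400012800001/1008000228000010)] := by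
      rw [hTdef, hSstar]
      ext i j
      fin_cases i <;> fin_cases j <;>
        simp [Matrix.diagonal, Matrix.sub_apply, Matrix.vecHead, Matrix.vecTail] <;> norm_num
    set L := Matrix.toEuclideanCLM (𝕜 := ℝ) (Sstar - T) with hL
    set x : EuclideanSpace ℝ (Fin 3) := (WithLp.equiv 2 (Fin 3 → ℝ)).symm ![1, 0, 0] with hx
    have hxnorm : ‖x‖ = 1 := by
      rw [hx, EuclideanSpace.norm_eq]
      simp [Fin.sum_univ_three]
    have hLx : L x = (WithLp.equiv 2 (Fin 3 → ℝ)).symm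
        (Matrix.toLin' (Sstar - T) ![1, 0, 0]) := by
      rw [hx, hL]
      exact Matrix.toEuclideanCLM_toLp _ _
    have hLxnorm : (14000001/16800001 : ℝ) ≤ ‖L x‖ := by
      rw [hLx, EuclideanSpace.norm_eq]
      have hval : ∀ i, Matrix.toLin' (Sstar - T) ![1, 0, 0] i = (Sstar - T) i 0 := by
        intro i
        simp [Matrix.toLin'_apply, Matrix.mulVec, dotProduct, Fin.sum_univ_three, Matrix.vecHead]
      have h0 : (Sstar - T) 0 0 = -(14000001/16800001) := by rw [hD]; norm_num
      have h1 : (Sstar - T) 1 0 = 1400000/16800001 := by rw [hD]; norm_num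
      have h2 : (Sstar - T) 2 0 = 1400000/16800001 := by rw [hD]; norm_num [Matrix.vecHead, Matrix.vecTail, Matrix.cons_val_two]
      rw [show (14000001/16800001 : ℝ) = Real.sqrt ((14000001/16800001)^2) by
        rw [Real.sqrt_sq (by norm_num)]]
      apply Real.sqrt_le_sqrt
      rw [Fin.sum_univ_three]
      simp only [WithLp.equiv_symm_apply, PiLp.toLp_apply, hval, h0, h1, h2, Real.norm_eq_abs, sq_abs]
      nlinarith [sq_nonneg ((1400000:ℝ)/16800001)]
    have hle := L.le_opNorm x
    rw [hxnorm, mul_one] at hle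
    calc (1/2 : ℝ) ≤ 14000001/16800001 := by norm_num
      _ ≤ ‖L x‖ := hLxnorm
      _ ≤ ‖L‖ := hle
  · -- spectrum condition
    intro a ha b hb
    have ha' : ((algebraMap ℝ (Matrix (Fin 2) (Fin 2) ℝ) a) - Xi).det = 0 := by
      have h := spectrum.mem_iff.mp ha
      by_contra hc
      exact h ((Matrix.isUnit_iff_isUnit_det _).mpr (isUnit_iff_ne_zero.mpr hc))
    have hb' : ((algebraMap ℝ (Matrix (Fin 3) (Fin 3) ℝ) b) - T).det = 0 := by
      have h := spectrum.mem_iff.mp hb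
      by_contra hc
      exact h ((Matrix.isUnit_iff_isUnit_det _).mpr (isUnit_iff_ne_zero.mpr hc))
    rw [hXidef] at ha'
    rw [Matrix.det_fin_two] at ha'
    simp [Matrix.algebraMap_matrix_apply, Matrix.sub_apply] at ha'
    rw [hTdef] at hb'
    rw [Matrix.det_fin_three] at hb'
    simp [Matrix.algebraMap_matrix_apply, Matrix.sub_apply, Matrix.diagonal] at hb'
    have haq : (a - 1400000) * (a - 600000) = 0 := by nlinarith [ha']
    have hb1 : b ≤ 1 := by
      rcases hb' with h | h <;> linarith
    rcases mul_eq_zero.mp haq with h | h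
    · have : a = 1400000 := by linarith
      rw [this]; nlinarith
    · have : a = 600000 := by linarith
      rw [this]; nlinarith
end
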